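/- Let n ≥ 3 and let k be an algebraically closed field whose characteristic is either 0 or at least n. If x = (x_0, …, x_n) ∈ k^{n+1} is a nonzero solution of the Büchi system of length n, then at most two of the coordinates x_0, …, x_n are zero. -/

import Mathlib

/-!
For `1 ≤ i ≤ n` the squares `x_i²` have constant second difference `2 x_0²`, so `x_i² = P(i)` for a
quadratic `P` with leading coefficient `x_0²`. The vanishing coordinates `x_i` with `i ≥ 1` give
roots `i` of `P`, pairwise distinct in `k` because the characteristic is `0` or at least `n`. Three
vanishing coordinates therefore give `P` more roots than its degree: either all three have `i ≥ 1`,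
or `x_0 = 0`, `P` is linear and two of them have `i ≥ 1`. Hence `P = 0`, which forces every `x_i`
to vanish.
-/

open Polynomial

theorem eq_quadratic_of_second_difference_eq {R : Type*} [CommRing R] {s : ℕ → R} {d : R} {N : ℕ}
    (h : ∀ i, i + 2 ≤ N → s (i + 2) - 2 * s (i + 1) + s i = 2 * d) :
    ∀ i ≤ N, s i = d * i ^ 2 + (s 1 - s 0 - d) * i + s 0
  | 0, _ => by simp
  | 1, _ => by push_cast; ring
  | i + 2, hi => by
    have hrec := h i hi
    rw [eq_quadratic_of_second_difference_eq h i (by omega),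
      eq_quadratic_of_second_difference_eq h (i + 1) (by omega)] at hrec
    push_cast at hrec ⊢
    linear_combination hrec

theorem natCast_injOn_Ico_of_ringChar {R : Type*} [NonAssocRing R] {n : ℕ}
    (hchar : ringChar R = 0 ∨ n ≤ ringChar R) (m : ℕ) :
    Set.InjOn (Nat.cast : ℕ → R) (Set.Ico m (m + n)) := by
  intro i hi j hj hij
  rw [CharP.natCast_eq_natCast R (ringChar R)] at hij
  rcases hchar with h0 | hn
  · rwa [h0, Nat.modEq_zero_iff] at hij
  · refine hij.eq_of_abs_lt ?_
    simp only [Set.mem_Ico] at hi hj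
    rw [abs_lt]
    constructor <;> omega

section Buchi

variable {k : Type*} [CommRing k]

/-- The quadratic with leading coefficient `x 0 ^ 2` taking the values `x 1 ^ 2`, `x 2 ^ 2` at
`1`, `2`. -/
noncomputable def buchiQuadratic (x : ℕ → k) : k[X] :=
  C (x 0 ^ 2) * X ^ 2 + C (x 2 ^ 2 - x 1 ^ 2 - 3 * x 0 ^ 2) * X
    + C (2 * x 1 ^ 2 - x 2 ^ 2 + 2 * x 0 ^ 2)

theorem coeff_buchiQuadratic_two (x : ℕ → k) : (buchiQuadratic x).coeff 2 = x 0 ^ 2 := by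
  simp only [buchiQuadratic, coeff_add, coeff_C_mul, coeff_X_pow, coeff_X, coeff_C]
  norm_num

theorem natDegree_buchiQuadratic_le_one {x : ℕ → k} (h : x 0 = 0) :
    (buchiQuadratic x).natDegree ≤ 1 := by
  rw [buchiQuadratic, h]
  simp only [ne_eq, OfNat.ofNat_ne_zero, not_false_eq_true, zero_pow, map_zero, zero_mul, zero_add]
  exact natDegree_linear_le

theorem sq_eq_eval_buchiQuadratic {n : ℕ} {x : ℕ → k}
    (hsys : ∀ i : ℕ, 1 ≤ i → i ≤ n - 2 →
      x (i + 2) ^ 2 - 2 * x (i + 1) ^ 2 + x i ^ 2 - 2 * x 0 ^ 2 = 0)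
    {i : ℕ} (hi₁ : 1 ≤ i) (hin : i ≤ n) :
    x i ^ 2 = (buchiQuadratic x).eval (i : k) := by
  obtain ⟨j, rfl⟩ : ∃ j, i = j + 1 := ⟨i - 1, by omega⟩
  have hshift := eq_quadratic_of_second_difference_eq (s := fun j ↦ x (j + 1) ^ 2)
    (d := x 0 ^ 2) (N := n - 1)
    (fun j hj ↦ by linear_combination hsys (j + 1) (by omega) (by omega)) j (by omega)
  simp only [buchiQuadratic, eval_add, eval_mul, eval_pow, eval_C, eval_X, Nat.cast_add,
    Nat.cast_one] at hshift ⊢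
  linear_combination hshift

theorem buchiQuadratic_eq_zero_of_natDegree_lt_card [IsDomain k] {n : ℕ}
    (hchar : ringChar k = 0 ∨ n ≤ ringChar k) {x : ℕ → k}
    (hsys : ∀ i : ℕ, 1 ≤ i → i ≤ n - 2 →
      x (i + 2) ^ 2 - 2 * x (i + 1) ^ 2 + x i ^ 2 - 2 * x 0 ^ 2 = 0)
    {S : Finset ℕ} (hS : ∀ i ∈ S, 1 ≤ i ∧ i ≤ n ∧ x i = 0)
    (hcard : (buchiQuadratic x).natDegree < S.card) : buchiQuadratic x = 0 := by
  classical
  have hinj : Set.InjOn (Nat.cast : ℕ → k) S := (natCast_injOn_Ico_of_ringChar hchar 1).mono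
    fun i hi ↦ by have := hS i hi; simp only [Set.mem_Ico]; omega
  refine (buchiQuadratic x).eq_zero_of_natDegree_lt_card_of_eval_eq_zero' (S.image Nat.cast) ?_
    (by rwa [Finset.card_image_of_injOn hinj])
  simp only [Finset.mem_image]
  rintro _ ⟨i, hi, rfl⟩
  obtain ⟨hi₁, hin, hxi⟩ := hS i hi
  rw [← sq_eq_eval_buchiQuadratic hsys hi₁ hin, hxi, zero_pow two_ne_zero]

theorem eq_zero_of_buchiQuadratic_eq_zero [NoZeroDivisors k] {n : ℕ} {x : ℕ → k}
    (hsys : ∀ i : ℕ, 1 ≤ i → i ≤ n - 2 →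
      x (i + 2) ^ 2 - 2 * x (i + 1) ^ 2 + x i ^ 2 - 2 * x 0 ^ 2 = 0)
    (hP : buchiQuadratic x = 0) {i : ℕ} (hin : i ≤ n) : x i = 0 := by
  rcases Nat.eq_zero_or_pos i with rfl | hi₁
  · simpa [coeff_buchiQuadratic_two] using congrArg (coeff · 2) hP
  · simpa [hP] using sq_eq_eval_buchiQuadratic hsys hi₁ hin

end Buchi

open scoped Classical in
theorem buchi_at_most_two_zero_coords {k : Type*} [Field k]
    (n : ℕ) (hchar : ringChar k = 0 ∨ n ≤ ringChar k)
    (x : ℕ → k)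
    (hsys : ∀ i : ℕ, 1 ≤ i → i ≤ n - 2 →
      x (i + 2) ^ 2 - 2 * x (i + 1) ^ 2 + x i ^ 2 - 2 * x 0 ^ 2 = 0)
    (hx : ∃ i ≤ n, x i ≠ 0) :
    ((Finset.range (n + 1)).filter (fun i => x i = 0)).card ≤ 2 := by
  set Z := (Finset.range (n + 1)).filter (fun i => x i = 0)
  by_contra! hcard
  have hZ : ∀ i ∈ Z.erase 0, 1 ≤ i ∧ i ≤ n ∧ x i = 0 := fun i hi ↦ by
    obtain ⟨hi₀, hi⟩ := Finset.mem_erase.mp hi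
    obtain ⟨hin, hxi⟩ := Finset.mem_filter.mp hi
    exact ⟨Nat.one_le_iff_ne_zero.mpr hi₀, Nat.lt_succ_iff.mp (Finset.mem_range.mp hin), hxi⟩
  have hdeg : (buchiQuadratic x).natDegree < (Z.erase 0).card := by
    by_cases h0 : x 0 = 0
    · have hlin := natDegree_buchiQuadratic_le_one h0
      have herase := Finset.pred_card_le_card_erase (s := Z) (a := 0)
      omega
    · have hquad : (buchiQuadratic x).natDegree ≤ 2 := natDegree_quadratic_le
      rw [Finset.erase_eq_of_notMem (by simp [Z, h0])]
      omega
  obtain ⟨i, hin, hxi⟩ := hx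
  exact hxi (eq_zero_of_buchiQuadratic_eq_zero hsys
    (buchiQuadratic_eq_zero_of_natDegree_lt_card hchar hsys hZ hdeg) hin)
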